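/- There are no graphs G (with nonempty complement edge set) satisfying γ_tR(G) = 5 and γ_tR(G+e) = 3 for every edge e of the complement of G. -/
import Mathlib


/-- A total Roman dominating function: values in {0,1,2}, every vertex with value 0
has a neighbour with value 2, and vertices with positive value are not isolated in
the induced subgraph of positive-value vertices. -/
def TRDF {V : Type*} (G : SimpleGraph V) (f : V → ℕ) : Prop :=
  (∀ v, f v ≤ 2) ∧
  (∀ v, f v = 0 → ∃ u, G.Adj v u ∧ f u = 2) ∧
  (∀ v, 0 < f v → ∃ u, G.Adj v u ∧ 0 < f u)

/-- The total Roman domination number. -/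
noncomputable def trdn {V : Type*} [Fintype V] (G : SimpleGraph V) : ℕ :=
  sInf {w | ∃ f : V → ℕ, TRDF G f ∧ w = ∑ v, f v}

/-- The graph `G + uv`. -/
def addEdge {V : Type*} (G : SimpleGraph V) (u v : V) : SimpleGraph V :=
  G ⊔ SimpleGraph.fromEdgeSet {s(u, v)}

/-- `G` has no isolated vertices. -/
def NoIsolated {V : Type*} (G : SimpleGraph V) : Prop := ∀ v, ∃ u, G.Adj v u

lemma addEdge_adj {V : Type*} (G : SimpleGraph V) (u v x y : V) :
    (addEdge G u v).Adj x y ↔ G.Adj x y ∨ ((x = u ∧ y = v ∨ x = v ∧ y = u) ∧ x ≠ y) := by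
  simp [addEdge, Sym2.eq_iff]

lemma noIso {V : Type*} [Fintype V] (G : SimpleGraph V) (h : trdn G = 5) :
    ∀ x : V, ∃ y, G.Adj x y := by
  by_contra hc
  push_neg at hc
  obtain ⟨x, hx⟩ := hc
  have hemp : {w | ∃ f : V → ℕ, TRDF G f ∧ w = ∑ v, f v} = ∅ := by
    ext w
    simp only [Set.mem_setOf_eq, Set.mem_empty_iff_false, iff_false]
    rintro ⟨f, ⟨_, h0, hp⟩, _⟩
    rcases Nat.eq_zero_or_pos (f x) with h | h
    · obtain ⟨y, hy, _⟩ := h0 x h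
      exact hx y hy
    · obtain ⟨y, hy, _⟩ := hp x h
      exact hx y hy
  rw [trdn, hemp, Nat.sInf_empty] at h
  exact absurd h (by norm_num)

lemma key_le {V : Type*} [Fintype V] (G : SimpleGraph V) (h5 : trdn G = 5)
    (g : V → ℕ) (hg : TRDF G g) : 5 ≤ ∑ x, g x := by
  have := Nat.sInf_le (s := {w | ∃ f : V → ℕ, TRDF G f ∧ w = ∑ v, f v})
    ⟨g, hg, rfl⟩
  rw [trdn] at h5
  rw [h5] at this
  exact this

lemma structure3 {V : Type*} [Fintype V] (f : V → ℕ) (a b : V) (hab : a ≠ b)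
    (hsum : ∑ x, f x = 3) (ha : f a = 2) (hb : 0 < f b) :
    f b = 1 ∧ ∀ z, z ≠ a → z ≠ b → f z = 0 := by
  classical
  have h1 : f a + ∑ x ∈ Finset.univ.erase a, f x = ∑ x, f x :=
    Finset.add_sum_erase _ f (Finset.mem_univ a)
  have hbmem : b ∈ Finset.univ.erase a := Finset.mem_erase.mpr ⟨hab.symm, Finset.mem_univ b⟩
  have h2 : f b + ∑ x ∈ (Finset.univ.erase a).erase b, f x = ∑ x ∈ Finset.univ.erase a, f x :=
    Finset.add_sum_erase _ f hbmem
  have hR : f b = 1 ∧ ∑ x ∈ (Finset.univ.erase a).erase b, f x = 0 := by omega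
  refine ⟨hR.1, fun z hza hzb => ?_⟩
  have hz : z ∈ (Finset.univ.erase a).erase b :=
    Finset.mem_erase.mpr ⟨hzb, Finset.mem_erase.mpr ⟨hza, Finset.mem_univ z⟩⟩
  exact (Finset.sum_eq_zero_iff.mp hR.2) z hz

/-- Case: the weight-3 TRDF of `G + uv` has value 2 at `u`. -/
lemma aux {V : Type*} [Fintype V] (G : SimpleGraph V) (h5 : trdn G = 5)
    (u v : V) (hnadj : ¬ G.Adj u v) (huv : u ≠ v)
    (f : V → ℕ) (hf : TRDF (addEdge G u v) f) (hsum : ∑ x, f x = 3)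
    (hfu : f u = 2) : False := by
  classical
  obtain ⟨hle2, h0, hp⟩ := hf
  obtain ⟨b, hub, hbpos⟩ := hp u (by omega)
  have hub' : u ≠ b := (SimpleGraph.Adj.ne hub)
  obtain ⟨hb1, hzero⟩ := structure3 f u b hub' hsum hfu hbpos
  -- u is G-adjacent to every vertex other than u and v
  have hclaim : ∀ z, z ≠ u → z ≠ v → G.Adj u z := by
    intro z hzu hzv
    by_cases hzb : z = b
    · subst hzb
      rcases (addEdge_adj G u v u z).mp hub with h | h
      · exact h
      · rcases h.1 with ⟨_, h2⟩ | ⟨h1, _⟩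
        · exact absurd h2 hzv
        · exact absurd h1 huv
    · have hz0 : f z = 0 := hzero z hzu hzb
      obtain ⟨c, hzc, hc2⟩ := h0 z hz0
      have hcu : c = u := by
        by_contra hcu
        by_cases hcb : c = b
        · rw [hcb, hb1] at hc2; omega
        · rw [hzero c hcu hcb] at hc2; omega
      rw [hcu] at hzc
      rcases (addEdge_adj G u v z u).mp hzc with h | h
      · exact h.symm
      · rcases h.1 with ⟨h1, _⟩ | ⟨h1, _⟩
        · exact absurd h1 hzu
        · exact absurd h1 hzv
  -- v has a G-neighbour w
  obtain ⟨w, hvw⟩ := noIso G h5 v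
  have hwv : w ≠ v := (SimpleGraph.Adj.ne hvw).symm
  have hwu : w ≠ u := by
    intro h; subst h
    exact hnadj hvw.symm
  -- build the weight-4 TRDF of G
  set g : V → ℕ := fun x => if x = u then 2 else if x = v then 1 else if x = w then 1 else 0
    with hgdef
  have hgu : g u = 2 := by simp [hgdef]
  have hgv : g v = 1 := by simp [hgdef, huv.symm]
  have hgw : g w = 1 := by simp [hgdef, hwu, hwv]
  have htrdf : TRDF G g := by
    refine ⟨fun x => ?_, fun x hx => ?_, fun x hx => ?_⟩
    · simp only [hgdef]; split <;> try split <;> try split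
      all_goals omega
    · refine ⟨u, ?_, hgu⟩
      have hxu : x ≠ u := by intro h; rw [h, hgu] at hx; omega
      have hxv : x ≠ v := by intro h; rw [h, hgv] at hx; omega
      exact (hclaim x hxu hxv).symm
    · by_cases hxu : x = u
      · subst hxu
        exact ⟨w, hclaim w hwu hwv, by omega⟩
      by_cases hxv : x = v
      · subst hxv
        exact ⟨w, hvw, by omega⟩
      by_cases hxw : x = w
      · subst hxw
        exact ⟨v, hvw.symm, by omega⟩
      · exfalso; simp [hgdef, hxu, hxv, hxw] at hx
  have hsumle : ∑ x, g x ≤ 4 := by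
    have hpt : ∀ x, g x ≤ (if x = u then 2 else 0) + ((if x = v then 1 else 0)
        + (if x = w then 1 else 0)) := by
      intro x
      simp only [hgdef]
      split <;> [skip; split <;> [skip; split]] <;> simp
    calc ∑ x, g x ≤ ∑ x, ((if x = u then 2 else 0) + ((if x = v then 1 else 0)
        + (if x = w then 1 else 0))) := Finset.sum_le_sum fun x _ => hpt x
      _ = 4 := by
        rw [Finset.sum_add_distrib, Finset.sum_add_distrib]
        simp [Finset.sum_ite_eq']
  have := key_le G h5 g htrdf
  omega

theorem stmt8 {V : Type*} [Fintype V] (G : SimpleGraph V)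
    (hne : ∃ u v, Gᶜ.Adj u v) :
    ¬ (trdn G = 5 ∧ ∀ u v, Gᶜ.Adj u v → trdn (addEdge G u v) = 3) := by
  classical
  rintro ⟨h5, hall⟩
  obtain ⟨u, v, huv⟩ := hne
  have hnadj : ¬ G.Adj u v := huv.2
  have hune : u ≠ v := huv.ne
  have h3 := hall u v huv
  -- extract a weight-3 TRDF of G + uv
  have hmem : (3 : ℕ) ∈ {w | ∃ f : V → ℕ, TRDF (addEdge G u v) f ∧ w = ∑ x, f x} := by
    rw [← h3, trdn]
    apply Nat.sInf_mem
    by_contra hemp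
    rw [Set.not_nonempty_iff_eq_empty] at hemp
    rw [trdn, hemp, Nat.sInf_empty] at h3
    exact absurd h3 (by norm_num)
  obtain ⟨f, hf, hsum⟩ := hmem
  have hsum : ∑ x, f x = 3 := hsum.symm
  by_cases h2 : ∃ a, f a = 2
  · obtain ⟨a, ha⟩ := h2
    by_cases hau : a = u
    · exact aux G h5 u v hnadj hune f hf hsum (hau ▸ ha)
    by_cases hav : a = v
    · have hcomm : addEdge G u v = addEdge G v u := by
        unfold addEdge
        rw [Sym2.eq_swap]
      rw [hcomm] at hf
      exact aux G h5 v u (fun h => hnadj h.symm) hune.symm f hf hsum (hav ▸ ha)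
    · -- a ∉ {u, v} : f itself is a TRDF of G of weight 3
      obtain ⟨hle2, h0, hp⟩ := hf
      obtain ⟨b, hab, hbpos⟩ := hp a (by omega)
      have hab' : a ≠ b := SimpleGraph.Adj.ne hab
      obtain ⟨hb1, hzero⟩ := structure3 f a b hab' hsum ha hbpos
      have hGab : G.Adj a b := by
        rcases (addEdge_adj G u v a b).mp hab with h | h
        · exact h
        · rcases h.1 with ⟨h1, _⟩ | ⟨h1, _⟩
          · exact absurd h1 hau
          · exact absurd h1 hav
      have htrdf : TRDF G f := by
        refine ⟨hle2, fun x hx => ?_, fun x hx => ?_⟩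
        · obtain ⟨c, hxc, hc2⟩ := h0 x hx
          have hca : c = a := by
            by_contra hca
            by_cases hcb : c = b
            · rw [hcb, hb1] at hc2; omega
            · rw [hzero c hca hcb] at hc2; omega
          rw [hca] at hxc
          refine ⟨a, ?_, ha⟩
          rcases (addEdge_adj G u v x a).mp hxc with h | h
          · exact h
          · rcases h.1 with ⟨_, h1⟩ | ⟨_, h1⟩
            · exact absurd h1 hav
            · exact absurd h1 hau
        · by_cases hxa : x = a
          · exact ⟨b, hxa ▸ hGab, by omega⟩
          by_cases hxb : x = b
          · exact ⟨a, hxb ▸ hGab.symm, by omega⟩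
          · exact absurd (hzero x hxa hxb) (by omega)
      have := key_le G h5 f htrdf
      omega
  · -- all values are 1; the graph has exactly 3 vertices
    push_neg at h2
    obtain ⟨hle2, h0, hp⟩ := hf
    have hall1 : ∀ x, f x = 1 := by
      intro x
      rcases Nat.eq_zero_or_pos (f x) with h | h
      · obtain ⟨c, _, hc2⟩ := h0 x h
        exact absurd hc2 (h2 c)
      · have := hle2 x
        have := h2 x
        omega
    have hcard : Fintype.card V = 3 := by
      have h1 : ∑ x : V, f x = Fintype.card V := by
        rw [Finset.sum_congr rfl fun x _ => hall1 x]
        simp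
      omega
    obtain ⟨w, huw⟩ := noIso G h5 u
    have hwu : w ≠ u := (SimpleGraph.Adj.ne huw).symm
    set g : V → ℕ := fun x => if x = u then 2 else if x = w then 2 else 0 with hgdef
    have hgu : g u = 2 := by simp [hgdef]
    have hgw : g w = 2 := by simp [hgdef, hwu]
    have htrdf : TRDF G g := by
      refine ⟨fun x => ?_, fun x hx => ?_, fun x hx => ?_⟩
      · simp only [hgdef]; split <;> try split
        all_goals omega
      · have hxu : x ≠ u := by intro h; rw [h, hgu] at hx; omega
        have hxw : x ≠ w := by intro h; rw [h, hgw] at hx; omega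
        obtain ⟨y, hxy⟩ := noIso G h5 x
        have hyx : y ≠ x := (SimpleGraph.Adj.ne hxy).symm
        -- V has 3 elements: x, u, w distinct, so y ∈ {u, w}
        have hy : y = u ∨ y = w := by
          by_contra hy
          push_neg at hy
          have hsub : ({x, u, w} : Finset V) ⊆ Finset.univ := Finset.subset_univ _
          have hcard3 : ({x, u, w} : Finset V).card = 3 := by
            rw [Finset.card_insert_of_notMem (by simp [hxu, hxw]),
              Finset.card_insert_of_notMem (by simp [hwu.symm])]
            simp
          have huniv : ({x, u, w} : Finset V) = Finset.univ :=
            Finset.eq_univ_of_card _ (by rw [hcard3, hcard])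
          have : y ∈ ({x, u, w} : Finset V) := huniv ▸ Finset.mem_univ y
          simp [hyx, hy.1, hy.2] at this
        rcases hy with h | h
        · exact ⟨u, h ▸ hxy, hgu⟩
        · exact ⟨w, h ▸ hxy, hgw⟩
      · by_cases hxu : x = u
        · exact ⟨w, hxu ▸ huw, by omega⟩
        by_cases hxw : x = w
        · exact ⟨u, hxw ▸ huw.symm, by omega⟩
        · exfalso; simp [hgdef, hxu, hxw] at hx
    have hsumle : ∑ x, g x ≤ 4 := by
      have hpt : ∀ x, g x ≤ (if x = u then 2 else 0) + (if x = w then 2 else 0) := by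
        intro x
        simp only [hgdef]
        split <;> [skip; split] <;> simp
      calc ∑ x, g x ≤ ∑ x, ((if x = u then 2 else 0) + (if x = w then 2 else 0)) :=
          Finset.sum_le_sum fun x _ => hpt x
        _ = 4 := by
          rw [Finset.sum_add_distrib]
          simp [Finset.sum_ite_eq']
    have := key_le G h5 g htrdf
    omega
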